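/- arXiv:2008.10390 — 6 statements merged into one kernel-verified Lean document; each statement's English description precedes it below -/
import Mathlib

section
/- Let a ≥ 1 and b ≥ 1 be natural numbers, θ > 0 and c > 0 reals. Define G(x) = (1 − e^{−θx} · Σ_{p=0}^{b−1} (θx)^p/p!)^a for x ≥ 0. Then lim_{γ→∞} γ^{ab} · G(c/γ) = (θ^b c^b / b!)^a. (This is the high-SNR asymptotic average BLER, Eqs. (36)–(37) evaluated with c equal to β/(α_H − α_L β) or β/α_L.) -/
/-!
Write `y = θc/γ`. Then `1 - e^{-y} ∑_{p<b} y^p/p! = e^{-y} (e^y - ∑_{p<b} y^p/p!)`, and the Taylor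
tail `e^y - ∑_{p<b} y^p/p!` is `y^b/b! + O(y^{b+1})` as `y → 0`. Since `γ^b y^b = (θc)^b` and
`γ^b y^{b+1} = (θc)^{b+1}/γ → 0`, `γ^b (1 - e^{-y} ∑_{p<b} y^p/p!) → (θc)^b/b!`; and
`γ^{ab} G(c/γ)` is the `a`-th power of this.
-/

open Filter Finset Real Asymptotics Topology

lemma exp_sub_sum_range_succ_isBigO (n : ℕ) :
    (fun x : ℝ => exp x - ∑ p ∈ range (n + 1), x ^ p / p.factorial) =O[𝓝 0] (· ^ (n + 1)) := by
  refine IsBigO.of_bound ((n + 1 + 1) / ((n + 1).factorial * (n + 1))) ?_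
  filter_upwards [Metric.closedBall_mem_nhds (0 : ℝ) one_pos] with x hx
  rw [mem_closedBall_zero_iff, Real.norm_eq_abs] at hx
  rw [Real.norm_eq_abs, Real.norm_eq_abs, abs_pow, mul_comm]
  simpa using Real.exp_bound hx n.succ_pos

lemma tendsto_pow_mul_exp_sub_sum_range (b : ℕ) (k : ℝ) :
    Tendsto (fun γ : ℝ => γ ^ b * (exp (k / γ) - ∑ p ∈ range b, (k / γ) ^ p / p.factorial))
      atTop (𝓝 (k ^ b / b.factorial)) := by
  have hk : Tendsto (fun γ : ℝ => k / γ) atTop (𝓝 0) := tendsto_const_nhds.div_atTop tendsto_id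
  have hremainder : Tendsto
      (fun γ : ℝ => γ ^ b * (exp (k / γ) - ∑ p ∈ range (b + 1), (k / γ) ^ p / p.factorial))
      atTop (𝓝 0) := by
    have hO := (isBigO_refl (fun γ : ℝ => γ ^ b) atTop).mul
      ((exp_sub_sum_range_succ_isBigO b).comp_tendsto hk)
    have hdecay : Tendsto (fun γ : ℝ => k ^ (b + 1) * γ⁻¹) atTop (𝓝 0) := by
      simpa using tendsto_inv_atTop_zero.const_mul (k ^ (b + 1))
    refine hO.trans_tendsto (hdecay.congr' ?_)
    filter_upwards [eventually_ne_atTop 0] with γ hγ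
    change k ^ (b + 1) * γ⁻¹ = γ ^ b * (k / γ) ^ (b + 1)
    rw [div_pow]
    field_simp
    ring
  rw [← add_zero (k ^ b / _)]
  refine (hremainder.const_add _).congr' ?_
  filter_upwards [eventually_ne_atTop 0] with γ hγ
  rw [sum_range_succ, div_pow]
  field_simp
  ring

lemma tendsto_pow_mul_one_sub_exp_neg_mul_sum_range (b : ℕ) (k : ℝ) :
    Tendsto (fun γ : ℝ =>
        γ ^ b * (1 - exp (-(k / γ)) * ∑ p ∈ range b, (k / γ) ^ p / p.factorial))
      atTop (𝓝 (k ^ b / b.factorial)) := by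
  have hexp : Tendsto (fun γ : ℝ => exp (-(k / γ))) atTop (𝓝 1) := by
    simpa using (tendsto_const_nhds.div_atTop (tendsto_id (α := ℝ)) (a := k)).neg.rexp
  rw [← one_mul (k ^ b / _)]
  refine (hexp.mul (tendsto_pow_mul_exp_sub_sum_range b k)).congr fun γ => ?_
  have hinv : exp (-(k / γ)) * exp (k / γ) = 1 := by rw [← exp_add, neg_add_cancel, exp_zero]
  linear_combination γ ^ b * hinv

theorem stmt_9_general (a b : ℕ) (θ c : ℝ)
    (G : ℝ → ℝ)
    (hG : ∀ x, G x =
      (1 - Real.exp (-θ * x) * ∑ p ∈ Finset.range b, (θ * x) ^ p / p.factorial) ^ a) :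
    Filter.Tendsto (fun γ : ℝ => γ ^ (a * b) * G (c / γ))
      Filter.atTop (nhds ((θ ^ b * c ^ b / (b.factorial : ℝ)) ^ a)) := by
  have hbase := tendsto_pow_mul_one_sub_exp_neg_mul_sum_range b (θ * c)
  rw [mul_pow] at hbase
  refine (hbase.pow a).congr fun γ => ?_
  rw [hG, mul_comm a b, pow_mul, ← mul_pow, neg_mul, mul_div_assoc]

/-- High-SNR asymptotic average BLER (Eqs. (36)–(37)):
for `G(x) = (1 − e^{−θx} Σ_{p<b} (θx)^p/p!)^a` and `c > 0`,
`lim_{γ→∞} γ^{ab} G(c/γ) = (θ^b c^b/b!)^a`. -/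
theorem stmt_9 (a b : ℕ) (ha : 1 ≤ a) (hb : 1 ≤ b) (θ c : ℝ) (hθ : 0 < θ) (hc : 0 < c)
    (G : ℝ → ℝ)
    (hG : ∀ x, G x =
      (1 - Real.exp (-θ * x) * ∑ p ∈ Finset.range b, (θ * x) ^ p / p.factorial) ^ a) :
    Filter.Tendsto (fun γ : ℝ => γ ^ (a * b) * G (c / γ))
      Filter.atTop (nhds ((θ ^ b * c ^ b / (b.factorial : ℝ)) ^ a)) :=
  stmt_9_general a b θ c G hG
end

section
/- Let a ≥ 1 and b ≥ 1 be natural numbers, θ > 0 real, and let α_H > 0, α_L > 0, β > 0 be reals with α_H − α_L β > 0. Define G(x) = (1 − e^{−θx} · Σ_{p=0}^{b−1} (θx)^p/p!)^a and B_β(γ) = β/(γ(α_H − α_L β)). Then lim_{γ→∞} ( − log( G(B_β(γ)) ) / log(γ) ) = a·b. (This is the diversity order of the high-priority user, Eq. (37): D_H = m_H K_S K_H I under the HCS method, and D_H = m_H K_H I under the LCS method, where in each case the product equals a·b.) -/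
open Filter Real Finset

/-- Lower bound: `exp (-t) * t^b / b! ≤ 1 - exp (-t) * ∑_{p<b} t^p/p!` for `t ≥ 0`. -/
lemma aux_lower (b : ℕ) {t : ℝ} (ht : 0 ≤ t) :
    Real.exp (-t) * (t ^ b / b.factorial) ≤
      1 - Real.exp (-t) * ∑ p ∈ Finset.range b, t ^ p / p.factorial := by
  have hsum : ∑ p ∈ Finset.range (b + 1), t ^ p / p.factorial ≤ Real.exp t :=
    Real.sum_le_exp_of_nonneg ht _
  rw [Finset.sum_range_succ] at hsum
  have hexp : (0 : ℝ) < Real.exp (-t) := Real.exp_pos _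
  have key : Real.exp (-t) * ((∑ p ∈ Finset.range b, t ^ p / p.factorial) + t ^ b / b.factorial)
      ≤ 1 := by
    rw [Real.exp_neg]
    calc (Real.exp t)⁻¹ * ((∑ p ∈ Finset.range b, t ^ p / p.factorial) + t ^ b / b.factorial)
        ≤ (Real.exp t)⁻¹ * Real.exp t := by
          apply mul_le_mul_of_nonneg_left hsum (by positivity)
      _ = 1 := inv_mul_cancel₀ (Real.exp_pos t).ne'
  nlinarith [key]

/-- Upper bound: `1 - exp (-t) * ∑_{p<b} t^p/p! ≤ t^b * ((b+1)/(b! * b))` for `0 ≤ t ≤ 1`. -/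
lemma aux_upper (b : ℕ) (hb : 1 ≤ b) {t : ℝ} (ht : 0 ≤ t) (ht1 : t ≤ 1) :
    1 - Real.exp (-t) * ∑ p ∈ Finset.range b, t ^ p / p.factorial ≤
      t ^ b * ((b + 1) / (b.factorial * b)) := by
  have hbpos : 0 < b := hb
  have h1 : Real.exp t ≤ (∑ p ∈ Finset.range b, t ^ p / p.factorial) +
      t ^ b * (b + 1) / (b.factorial * b) := Real.exp_bound' ht ht1 hbpos
  have h2 : 0 ≤ Real.exp t - ∑ p ∈ Finset.range b, t ^ p / p.factorial :=
    sub_nonneg.2 (Real.sum_le_exp_of_nonneg ht b)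
  have h3 : Real.exp (-t) ≤ 1 := Real.exp_le_one_iff.2 (by linarith)
  have h4 : 1 - Real.exp (-t) * ∑ p ∈ Finset.range b, t ^ p / p.factorial
      = Real.exp (-t) * (Real.exp t - ∑ p ∈ Finset.range b, t ^ p / p.factorial) := by
    rw [mul_sub, ← Real.exp_add]
    simp
  rw [h4]
  calc Real.exp (-t) * (Real.exp t - ∑ p ∈ Finset.range b, t ^ p / p.factorial)
      ≤ 1 * (Real.exp t - ∑ p ∈ Finset.range b, t ^ p / p.factorial) :=
        mul_le_mul_of_nonneg_right h3 h2
    _ = Real.exp t - ∑ p ∈ Finset.range b, t ^ p / p.factorial := one_mul _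
    _ ≤ t ^ b * (b + 1) / (b.factorial * b) := by linarith
    _ = t ^ b * ((b + 1) / (b.factorial * b)) := by ring

/-- Diversity order of the high-priority user (Eq. (37)):
with `G(x) = (1 − e^{−θx} Σ_{p<b} (θx)^p/p!)^a` and `B_β(γ) = β/(γ(α_H − α_L β))`,
`lim_{γ→∞} (−log G(B_β(γ)) / log γ) = a b`. -/
theorem stmt_10 (a b : ℕ) (ha : 1 ≤ a) (hb : 1 ≤ b) (θ : ℝ) (hθ : 0 < θ)
    (αH αL β : ℝ) (hαH : 0 < αH) (hαL : 0 < αL) (hβ : 0 < β) (h : 0 < αH - αL * β)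
    (G : ℝ → ℝ)
    (hG : ∀ x, G x =
      (1 - Real.exp (-θ * x) * ∑ p ∈ Finset.range b, (θ * x) ^ p / p.factorial) ^ a) :
    Filter.Tendsto
      (fun γ : ℝ => -Real.log (G (β / (γ * (αH - αL * β)))) / Real.log γ)
      Filter.atTop (nhds ((a * b : ℕ) : ℝ)) := by
  push_cast
  set d : ℝ := αH - αL * β with hd
  have hc : (0 : ℝ) < θ * (β / d) := by positivity
  set c : ℝ := θ * (β / d) with hcdef
  set C : ℝ := (b + 1) / (b.factorial * b) with hC
  have hCpos : 0 < C := by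
    have : (0:ℝ) < b := by exact_mod_cast hb
    positivity
  -- lower comparison function: a*b - (a*b*log c + a*log C)/log γ
  -- upper comparison function: a*b + (a*(c/γ) + a*log b! - a*b*log c)/log γ
  have hlogtop : Tendsto Real.log atTop atTop := Real.tendsto_log_atTop
  have hinv : Tendsto (fun γ : ℝ => (Real.log γ)⁻¹) atTop (nhds 0) :=
    hlogtop.inv_tendsto_atTop
  have hlo : Tendsto (fun γ : ℝ => (a*b : ℝ) - ((a:ℝ)*b*Real.log c + a*Real.log C) * (Real.log γ)⁻¹)
      atTop (nhds ((a*b : ℝ))) := by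
    have := hinv.const_mul ((a:ℝ)*b*Real.log c + a*Real.log C)
    simpa using (tendsto_const_nhds.sub this)
  have hhi : Tendsto (fun γ : ℝ =>
      (a*b : ℝ) + ((a:ℝ)*(c/γ) + a*Real.log (b.factorial) - (a:ℝ)*b*Real.log c) * (Real.log γ)⁻¹)
      atTop (nhds ((a*b : ℝ))) := by
    have hdiv : Tendsto (fun γ : ℝ => c/γ) atTop (nhds 0) := by
      simpa [div_eq_mul_inv] using tendsto_inv_atTop_zero.const_mul c
    have h1 : Tendsto (fun γ : ℝ => (a:ℝ)*(c/γ) + a*Real.log (b.factorial) - (a:ℝ)*b*Real.log c)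
        atTop (nhds ((a:ℝ)*0 + a*Real.log (b.factorial) - (a:ℝ)*b*Real.log c)) :=
      ((hdiv.const_mul _).add_const _).sub_const _
    have h2 := h1.mul hinv
    rw [mul_zero] at h2
    simpa using tendsto_const_nhds.add h2
  have key : ∀ᶠ γ : ℝ in atTop,
      ((a*b : ℝ) - ((a:ℝ)*b*Real.log c + a*Real.log C) * (Real.log γ)⁻¹
        ≤ -Real.log (G (β / (γ * d))) / Real.log γ) ∧
      (-Real.log (G (β / (γ * d))) / Real.log γ ≤
        (a*b : ℝ) + ((a:ℝ)*(c/γ) + a*Real.log (b.factorial) - (a:ℝ)*b*Real.log c)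
          * (Real.log γ)⁻¹) := by
    filter_upwards [eventually_ge_atTop (max c 2)] with γ hγ
    have hγ2 : (2:ℝ) ≤ γ := le_trans (le_max_right _ _) hγ
    have hγ0 : 0 < γ := by linarith
    have hγc : c ≤ γ := le_trans (le_max_left _ _) hγ
    have hL : 0 < Real.log γ := Real.log_pos (by linarith)
    have ht0 : 0 < c/γ := div_pos hc hγ0
    have ht1 : c/γ ≤ 1 := (div_le_one hγ0).2 hγc
    have harg : θ * (β / (γ * d)) = c/γ := by
      rw [hcdef]; field_simp
    have hGeq : G (β / (γ * d)) =
        (1 - Real.exp (-(c/γ)) * ∑ p ∈ Finset.range b, (c/γ)^p / p.factorial) ^ a := by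
      rw [hG, neg_mul, harg]
    set F := 1 - Real.exp (-(c/γ)) * ∑ p ∈ Finset.range b, (c/γ)^p / p.factorial with hF
    have hFlo : Real.exp (-(c/γ)) * ((c/γ) ^ b / b.factorial) ≤ F := aux_lower b ht0.le
    have hFhi : F ≤ (c/γ) ^ b * C := aux_upper b hb ht0.le ht1
    have hFpos : 0 < F := lt_of_lt_of_le (by positivity) hFlo
    have hlogG : Real.log (G (β / (γ * d))) = (a:ℝ) * Real.log F := by
      rw [hGeq, Real.log_pow]
    have hlogt : Real.log (c/γ) = Real.log c - Real.log γ :=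
      Real.log_div (ne_of_gt hc) (ne_of_gt hγ0)
    have hbfac : (0:ℝ) < b.factorial := by exact_mod_cast b.factorial_pos
    have hlogF_le : Real.log F ≤ (b:ℝ) * (Real.log c - Real.log γ) + Real.log C := by
      calc Real.log F ≤ Real.log ((c/γ)^b * C) := Real.log_le_log hFpos hFhi
        _ = (b:ℝ)*Real.log (c/γ) + Real.log C := by
            rw [Real.log_mul (by positivity) hCpos.ne', Real.log_pow]
        _ = _ := by rw [hlogt]
    have hlogF_ge : -(c/γ) + ((b:ℝ)*(Real.log c - Real.log γ) - Real.log b.factorial)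
        ≤ Real.log F := by
      have := Real.log_le_log (by positivity) hFlo
      calc -(c/γ) + ((b:ℝ)*(Real.log c - Real.log γ) - Real.log b.factorial)
          = Real.log (Real.exp (-(c/γ)) * ((c/γ) ^ b / b.factorial)) := by
            rw [Real.log_mul (Real.exp_pos _).ne' (by positivity), Real.log_exp,
              Real.log_div (by positivity) hbfac.ne', Real.log_pow, hlogt]
        _ ≤ Real.log F := this
    have hLinv : (Real.log γ)⁻¹ * Real.log γ = 1 := inv_mul_cancel₀ hL.ne'
    have haR : (0:ℝ) ≤ (a:ℝ) := Nat.cast_nonneg a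
    have hmul1 := mul_le_mul_of_nonneg_left hlogF_le haR
    have hmul2 := mul_le_mul_of_nonneg_left hlogF_ge haR
    constructor
    · rw [hlogG]
      have e1 : (↑a*↑b : ℝ) - (↑a*↑b*Real.log c + ↑a*Real.log C) * (Real.log γ)⁻¹
          = ((a:ℝ)*b*Real.log γ - ((a:ℝ)*b*Real.log c + a*Real.log C)) / Real.log γ := by
        field_simp
      rw [e1]
      gcongr
      linarith [hmul1]
    · rw [hlogG]
      have e2 : (↑a*↑b : ℝ) + ((a:ℝ)*(c/γ) + a*Real.log (b.factorial) - (a:ℝ)*b*Real.log c)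
            * (Real.log γ)⁻¹
          = ((a:ℝ)*b*Real.log γ + ((a:ℝ)*(c/γ) + a*Real.log (b.factorial)
              - (a:ℝ)*b*Real.log c)) / Real.log γ := by
        field_simp
      rw [e2]
      gcongr
      linarith [hmul2]
  exact tendsto_of_tendsto_of_tendsto_of_le_of_le' hlo hhi
    (key.mono fun γ hγ => hγ.1) (key.mono fun γ hγ => hγ.2)
end

section
/- Let a ≥ 1 and b ≥ 1 be natural numbers, θ > 0 real, and let α_H > 0, α_L > 0, β_H > 0, β_L > 0 be reals with α_H − α_L β_H > 0. Define G(x) = (1 − e^{−θx} · Σ_{p=0}^{b−1} (θx)^p/p!)^a. Then lim_{γ→∞} ( − log( G(β_H/(γ(α_H − α_L β_H))) + G(β_L/(α_L γ)) ) / log(γ) ) = a·b. (This is the diversity order of the low-priority user, Eq. (38): D_L = m_L K_L J under the HCS method and D_L = m_L K_S K_L J under the LCS method, where in each case the product equals a·b.) -/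
/-!
For `x ≥ 0` the Erlang CDF `F_b x = 1 - e^{-x} ∑_{p<b} x^p/p!` is squeezed as
`e^{-x} x^b/b! ≤ F_b x ≤ x^b`: the lower bound keeps one term of the tail
`e^{-x} ∑_{p≥b} x^p/p!`, the upper bound estimates the whole tail by `x^b e^x`.
So `G (c/γ) γ^{ab}` stays between positive constants as `γ → ∞`, hence so does the sum of the
two error terms, and `-log` of the sum is `ab log γ + O(1)`.
-/

open Real Filter Finset Topology
open scoped Nat

-- The CDF of Erlang(b, 1); the paper's `G x` is `erlangCDF b (θ * x) ^ a`.
noncomputable def erlangCDF (b : ℕ) (x : ℝ) : ℝ := 1 - exp (-x) * ∑ p ∈ range b, x ^ p / p !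

lemma erlangCDF_eq_exp_neg_mul (b : ℕ) (x : ℝ) :
    erlangCDF b x = exp (-x) * (exp x - ∑ p ∈ range b, x ^ p / p !) := by
  rw [erlangCDF, mul_sub, ← exp_add, neg_add_cancel, exp_zero]

lemma exp_neg_mul_pow_div_factorial_le_erlangCDF (b : ℕ) {x : ℝ} (hx : 0 ≤ x) :
    exp (-x) * (x ^ b / b !) ≤ erlangCDF b x := by
  have hsum := sum_le_exp_of_nonneg hx (b + 1)
  rw [sum_range_succ] at hsum
  rw [erlangCDF_eq_exp_neg_mul]
  gcongr
  linarith

lemma exp_sub_sum_range_le_pow_mul_exp (b : ℕ) {x : ℝ} (hx : 0 ≤ x) :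
    exp x - ∑ p ∈ range b, x ^ p / p ! ≤ x ^ b * exp x := by
  have h := Complex.norm_exp_sub_sum_le_norm_mul_exp x b
  norm_cast at h
  rw [norm_of_nonneg hx] at h
  exact (le_norm_self _).trans h

lemma erlangCDF_le_pow (b : ℕ) {x : ℝ} (hx : 0 ≤ x) : erlangCDF b x ≤ x ^ b := by
  calc erlangCDF b x ≤ exp (-x) * (x ^ b * exp x) := by
        rw [erlangCDF_eq_exp_neg_mul]; gcongr; exact exp_sub_sum_range_le_pow_mul_exp b hx
    _ = x ^ b := by rw [mul_left_comm, ← exp_add, neg_add_cancel, exp_zero, mul_one]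

lemma erlangCDF_div_mul_pow_bounds (b : ℕ) {c : ℝ} (hc : 0 ≤ c) :
    ∀ᶠ γ in atTop, exp (-c) * (c ^ b / b !) ≤ erlangCDF b (c / γ) * γ ^ b ∧
      erlangCDF b (c / γ) * γ ^ b ≤ c ^ b := by
  filter_upwards [eventually_ge_atTop 1] with γ hγ
  have hγ0 : 0 < γ := one_pos.trans_le hγ
  have hx : 0 ≤ c / γ := div_nonneg hc hγ0.le
  have hscale : (c / γ) ^ b * γ ^ b = c ^ b := by rw [← mul_pow, div_mul_cancel₀ c hγ0.ne']
  constructor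
  · calc exp (-c) * (c ^ b / b !) ≤ exp (-(c / γ)) * ((c / γ) ^ b / b !) * γ ^ b := by
          rw [mul_assoc, div_mul_eq_mul_div, hscale]
          gcongr
          exact div_le_self hc hγ
      _ ≤ erlangCDF b (c / γ) * γ ^ b := by
          gcongr; exact exp_neg_mul_pow_div_factorial_le_erlangCDF b hx
  · calc erlangCDF b (c / γ) * γ ^ b ≤ (c / γ) ^ b * γ ^ b := by
          gcongr; exact erlangCDF_le_pow b hx
      _ = c ^ b := hscale

lemma erlangCDF_div_pow_mul_pow_bounds (a b : ℕ) {c : ℝ} (hc : 0 ≤ c) :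
    ∀ᶠ γ in atTop, (exp (-c) * (c ^ b / b !)) ^ a ≤ erlangCDF b (c / γ) ^ a * γ ^ (a * b) ∧
      erlangCDF b (c / γ) ^ a * γ ^ (a * b) ≤ (c ^ b) ^ a := by
  filter_upwards [erlangCDF_div_mul_pow_bounds b hc] with γ ⟨hlow, hupp⟩
  rw [mul_comm a b, pow_mul, ← mul_pow]
  exact ⟨pow_le_pow_left₀ (by positivity) hlow a,
    pow_le_pow_left₀ ((by positivity : (0 : ℝ) ≤ _).trans hlow) hupp a⟩

lemma tendsto_neg_log_div_log_of_mul_pow_bounds {f : ℝ → ℝ} {n : ℕ} {m M : ℝ} (hm : 0 < m)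
    (hf : ∀ᶠ γ in atTop, m ≤ f γ * γ ^ n ∧ f γ * γ ^ n ≤ M) :
    Tendsto (fun γ => -log (f γ) / log γ) atTop (𝓝 n) := by
  have hlog : ∀ᶠ γ in atTop, 0 < log γ := tendsto_log_atTop.eventually_gt_atTop 0
  have hrem : Tendsto (fun γ => log (f γ * γ ^ n) / log γ) atTop (𝓝 0) := by
    refine tendsto_of_tendsto_of_tendsto_of_le_of_le'
      ((tendsto_const_nhds (x := log m)).div_atTop tendsto_log_atTop)
      ((tendsto_const_nhds (x := log M)).div_atTop tendsto_log_atTop) ?_ ?_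
    · filter_upwards [hf, hlog] with γ hγ hγlog
      gcongr; exact hγ.1
    · filter_upwards [hf, hlog] with γ hγ hγlog
      gcongr
      · exact hm.trans_le hγ.1
      · exact hγ.2
  have heq : ∀ᶠ γ in atTop, (n : ℝ) - log (f γ * γ ^ n) / log γ = -log (f γ) / log γ := by
    filter_upwards [hf, hlog, eventually_gt_atTop 0] with γ hγ hγlog hγ0
    have hfγ : 0 < f γ := pos_of_mul_pos_left (hm.trans_le hγ.1) (by positivity)
    rw [log_mul hfγ.ne' (by positivity), log_pow]
    field_simp
    ring
  simpa using (tendsto_const_nhds.sub hrem).congr' heq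

theorem stmt_11_general (a b : ℕ) (θ : ℝ) (hθ : 0 < θ)
    (αH αL βH βL : ℝ) (hαL : 0 < αL) (hβH : 0 < βH) (hβL : 0 < βL)
    (h : 0 < αH - αL * βH)
    (G : ℝ → ℝ)
    (hG : ∀ x, G x =
      (1 - Real.exp (-θ * x) * ∑ p ∈ Finset.range b, (θ * x) ^ p / p.factorial) ^ a) :
    Filter.Tendsto
      (fun γ : ℝ =>
        -Real.log (G (βH / (γ * (αH - αL * βH))) + G (βL / (αL * γ))) / Real.log γ)
      Filter.atTop (nhds ((a * b : ℕ) : ℝ)) := by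
  have hGdiv : ∀ c γ, G (c / γ) = erlangCDF b (θ * c / γ) ^ a := fun c γ => by
    rw [hG, erlangCDF, neg_mul, mul_div_assoc]
  simp_rw [← div_div βL αL, div_mul_eq_div_div_swap, hGdiv]
  set cH := θ * (βH / (αH - αL * βH))
  set cL := θ * (βL / αL)
  refine tendsto_neg_log_div_log_of_mul_pow_bounds
    (m := (exp (-cH) * (cH ^ b / b !)) ^ a) (M := (cH ^ b) ^ a + (cL ^ b) ^ a) (by positivity) ?_
  filter_upwards [erlangCDF_div_pow_mul_pow_bounds a b (by positivity : 0 ≤ cH),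
    erlangCDF_div_pow_mul_pow_bounds a b (by positivity : 0 ≤ cL)] with γ hH hL
  have hL0 : 0 ≤ erlangCDF b (cL / γ) ^ a * γ ^ (a * b) := (by positivity : (0 : ℝ) ≤ _).trans hL.1
  rw [add_mul]
  constructor <;> linarith [hH.1, hH.2, hL.2]

/-- Diversity order of the low-priority user (Eq. (38)):
with `G(x) = (1 − e^{−θx} Σ_{p<b} (θx)^p/p!)^a`,
`lim_{γ→∞} (−log( G(β_H/(γ(α_H − α_L β_H))) + G(β_L/(α_L γ)) ) / log γ) = a b`. -/
theorem stmt_11 (a b : ℕ) (ha : 1 ≤ a) (hb : 1 ≤ b) (θ : ℝ) (hθ : 0 < θ)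
    (αH αL βH βL : ℝ) (hαH : 0 < αH) (hαL : 0 < αL) (hβH : 0 < βH) (hβL : 0 < βL)
    (h : 0 < αH - αL * βH)
    (G : ℝ → ℝ)
    (hG : ∀ x, G x =
      (1 - Real.exp (-θ * x) * ∑ p ∈ Finset.range b, (θ * x) ^ p / p.factorial) ^ a) :
    Filter.Tendsto
      (fun γ : ℝ =>
        -Real.log (G (βH / (γ * (αH - αL * βH))) + G (βL / (αL * γ))) / Real.log γ)
      Filter.atTop (nhds ((a * b : ℕ) : ℝ)) :=
  stmt_11_general a b θ hθ αH αL βH βL hαL hβH hβL h G hG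
end

section
/- Let n_H > 0, n_L > 0, τ_H > 0, τ_L > 0 be reals. Define N_H(α) = n_H / log₂((1 + τ_H)/(1 + ατ_H)) and N_L(α) = n_L / log₂(1 + ατ_L) for α ∈ (0, 1/2), and set f(α) = N_L(α) − N_H(α). Then f is continuous and strictly decreasing on (0, 1/2), f(α) → +∞ as α → 0⁺, and if lim_{α→(1/2)⁻} f(α) < 0 (in particular if f(α₀) < 0 for some α₀ < 1/2), then there exists a unique α* ∈ (0, 1/2) with N_H(α*) = N_L(α*). (This justifies the bisection procedure of Algorithm 1 for finding the optimal power allocation coefficient minimizing the common blocklength.) -/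
/-- Justification of the bisection procedure of Algorithm 1: with
`N_H(α) = n_H/log₂((1+τ_H)/(1+ατ_H))`, `N_L(α) = n_L/log₂(1+ατ_L)` and
`f = N_L − N_H`, the function `f` is continuous and strictly decreasing on
`(0, 1/2)`, tends to `+∞` as `α → 0⁺`, and if `f(α₀) < 0` for some
`α₀ ∈ (0, 1/2)` then there is a unique `α* ∈ (0, 1/2)` with `N_H(α*) = N_L(α*)`. -/
theorem stmt_16 (nH nL τH τL : ℝ) (hnH : 0 < nH) (hnL : 0 < nL)
    (hτH : 0 < τH) (hτL : 0 < τL)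
    (NH NL f : ℝ → ℝ)
    (hNH : ∀ α, NH α = nH / Real.logb 2 ((1 + τH) / (1 + α * τH)))
    (hNL : ∀ α, NL α = nL / Real.logb 2 (1 + α * τL))
    (hf : ∀ α, f α = NL α - NH α) :
    ContinuousOn f (Set.Ioo 0 (1 / 2)) ∧
    StrictAntiOn f (Set.Ioo 0 (1 / 2)) ∧
    Filter.Tendsto f (nhdsWithin 0 (Set.Ioi 0)) Filter.atTop ∧
    ((∃ α₀ ∈ Set.Ioo (0 : ℝ) (1 / 2), f α₀ < 0) →
      ∃! α : ℝ, α ∈ Set.Ioo (0 : ℝ) (1 / 2) ∧ NH α = NL α) := by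
  have h2 : (1:ℝ) < 2 := one_lt_two
  set g : ℝ → ℝ := fun α => Real.logb 2 (1 + α * τL) with hg
  set h : ℝ → ℝ := fun α => Real.logb 2 ((1 + τH) / (1 + α * τH)) with hh
  have hgpos : ∀ α : ℝ, 0 < α → 0 < g α := by
    intro α hα
    exact Real.logb_pos h2 (by nlinarith)
  have hhden : ∀ α : ℝ, 0 < α → (0:ℝ) < 1 + α * τH := by
    intro α hα; nlinarith
  have hhratio : ∀ α : ℝ, 0 < α → α < 1 → (1:ℝ) < (1 + τH) / (1 + α * τH) := by
    intro α hα hα1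
    rw [lt_div_iff₀ (hhden α hα)]
    nlinarith
  have hhpos : ∀ α : ℝ, 0 < α → α < 1 → 0 < h α := by
    intro α hα hα1
    exact Real.logb_pos h2 (hhratio α hα hα1)
  -- rewrite f
  have hf' : ∀ α, f α = nL / g α - nH / h α := by
    intro α; rw [hf, hNL, hNH]
  -- continuity
  have hcg : ContinuousOn g (Set.Ioo (0:ℝ) (1/2)) := by
    simp only [hg, Real.logb]
    apply ContinuousOn.div_const
    apply ContinuousOn.log (by fun_prop)
    intro x hx
    have := hx.1
    nlinarith
  have hch : ContinuousOn h (Set.Ioo (0:ℝ) (1/2)) := by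
    simp only [hh, Real.logb]
    apply ContinuousOn.div_const
    apply ContinuousOn.log
    · apply ContinuousOn.div continuousOn_const (by fun_prop)
      intro x hx; exact (hhden x hx.1).ne'
    · intro x hx
      have := hhratio x hx.1 (by linarith [hx.2])
      positivity
  have hcont : ContinuousOn f (Set.Ioo (0:ℝ) (1/2)) := by
    have : ContinuousOn (fun α => nL / g α - nH / h α) (Set.Ioo (0:ℝ) (1/2)) := by
      apply ContinuousOn.sub
      · exact ContinuousOn.div continuousOn_const hcg
          (fun x hx => (hgpos x hx.1).ne')
      · exact ContinuousOn.div continuousOn_const hch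
          (fun x hx => (hhpos x hx.1 (by linarith [hx.2])).ne')
    exact this.congr (fun α _ => hf' α)
  -- strict antitone
  have hanti : StrictAntiOn f (Set.Ioo (0:ℝ) (1/2)) := by
    intro a ha b hb hab
    rw [hf' a, hf' b]
    have hga : 0 < g a := hgpos a ha.1
    have hgab : g a < g b := by
      apply Real.logb_lt_logb h2 (by nlinarith [ha.1])
      nlinarith
    have hhb : 0 < h b := hhpos b hb.1 (by linarith [hb.2])
    have hhba : h b < h a := by
      have hr := hhratio b hb.1 (by linarith [hb.2])
      apply Real.logb_lt_logb h2 (by linarith)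
      apply div_lt_div_of_pos_left (by linarith) (hhden a ha.1)
      nlinarith [ha.1]
    have h1 : nL / g b < nL / g a := div_lt_div_of_pos_left hnL hga hgab
    have h2' : nH / h a < nH / h b := div_lt_div_of_pos_left hnH hhb hhba
    linarith
  -- tendsto
  have hgt : Filter.Tendsto g (nhdsWithin 0 (Set.Ioi 0)) (nhdsWithin 0 (Set.Ioi 0)) := by
    apply tendsto_nhdsWithin_of_tendsto_nhds_of_eventually_within
    · have hc : ContinuousAt g 0 := by
        apply ContinuousAt.comp (Real.continuousAt_logb (by norm_num)) (by fun_prop)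
      have : Filter.Tendsto g (nhdsWithin 0 (Set.Ioi 0)) (nhds (g 0)) :=
        hc.tendsto.mono_left nhdsWithin_le_nhds
      simpa [hg] using this
    · filter_upwards [self_mem_nhdsWithin] with α hα
      exact hgpos α hα
  have hNLt : Filter.Tendsto (fun α => nL / g α) (nhdsWithin 0 (Set.Ioi 0)) Filter.atTop := by
    have hinv : Filter.Tendsto (fun α => (g α)⁻¹) (nhdsWithin 0 (Set.Ioi 0)) Filter.atTop :=
      Filter.Tendsto.inv_tendsto_nhdsGT_zero hgt
    simpa [div_eq_mul_inv] using Filter.Tendsto.const_mul_atTop hnL hinv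
  have hNHt : Filter.Tendsto (fun α => nH / h α) (nhdsWithin 0 (Set.Ioi 0))
      (nhds (nH / Real.logb 2 (1 + τH))) := by
    have hc : ContinuousAt (fun α => nH / h α) 0 := by
      apply ContinuousAt.div continuousAt_const
      · apply ContinuousAt.comp (Real.continuousAt_logb ?_)
        · fun_prop (disch := norm_num)
        · simp; positivity
      · simp only [hh]
        have : h 0 = Real.logb 2 (1 + τH) := by simp [hh]
        rw [show ((1:ℝ)+τH)/(1+0*τH) = 1+τH by norm_num]
        exact (Real.logb_pos h2 (by linarith)).ne'
    have ht : Filter.Tendsto (fun α => nH / h α) (nhdsWithin 0 (Set.Ioi 0))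
        (nhds (nH / h 0)) := hc.tendsto.mono_left nhdsWithin_le_nhds
    simpa [hh] using ht
  have htend : Filter.Tendsto f (nhdsWithin 0 (Set.Ioi 0)) Filter.atTop := by
    set L := nH / Real.logb 2 (1 + τH)
    have hev : ∀ᶠ α in nhdsWithin 0 (Set.Ioi (0:ℝ)), -(L+1) ≤ -(nH / h α) := by
      filter_upwards [hNHt.eventually (eventually_le_nhds (by linarith : L < L + 1))] with α hα
      linarith
    have := Filter.tendsto_atTop_add_right_of_le' _ (-(L+1)) hNLt hev
    apply this.congr
    intro α
    rw [hf' α]; ring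
  refine ⟨hcont, hanti, htend, ?_⟩
  rintro ⟨α₀, hα₀, hfα₀⟩
  -- find α₁ < α₀ with f α₁ ≥ 1
  have hmem : Set.Ioo (0:ℝ) α₀ ∈ nhdsWithin 0 (Set.Ioi (0:ℝ)) :=
    Ioo_mem_nhdsGT_of_mem ⟨le_refl _, hα₀.1⟩
  have hev : ∀ᶠ α in nhdsWithin 0 (Set.Ioi (0:ℝ)), 1 ≤ f α :=
    htend.eventually (Filter.eventually_ge_atTop 1)
  obtain ⟨α₁, hα₁f, hα₁⟩ := (hev.and (Filter.eventually_of_mem hmem (fun x hx => hx))).exists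
  have hsub : Set.Icc α₁ α₀ ⊆ Set.Ioo (0:ℝ) (1/2) := fun x hx =>
    ⟨lt_of_lt_of_le hα₁.1 hx.1, lt_of_le_of_lt hx.2 hα₀.2⟩
  have hIVT := intermediate_value_Icc' (le_of_lt hα₁.2) (hcont.mono hsub)
  have h0mem : (0:ℝ) ∈ Set.Icc (f α₀) (f α₁) := ⟨le_of_lt hfα₀, by linarith⟩
  obtain ⟨c, hc, hfc⟩ := hIVT h0mem
  have hcS : c ∈ Set.Ioo (0:ℝ) (1/2) := hsub hc
  refine ⟨c, ⟨hcS, ?_⟩, ?_⟩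
  · have := hf c; rw [hfc] at this; linarith
  · rintro β ⟨hβS, hβeq⟩
    have hfβ : f β = 0 := by rw [hf]; linarith [hβeq]
    exact hanti.injOn hβS hcS (by rw [hfβ, hfc])
end

section
/- Let a ≥ 1 and b ≥ 1 be natural numbers, θ > 0, κ > 0, χ > 0, N > 0, β > 0 reals with v = β − 1/(2χ√N) > 0 and μ = β + 1/(2χ√N). Define G(x) = (1 − e^{−θx} Σ_{p=0}^{b−1} (θx)^p/p!)^a. Then χ√N · ∫_v^μ G(x/κ) dx = 1 + χ√N · Σ_{p=1}^{a} Σ_{δ} (−1)^p · C(a,p) · (p!/(δ_0!···δ_{b−1}!)) · (Π_{q=0}^{b−1} (θ^q/q!)^{δ_q}) · κ^{−φ(δ)} · ω̂^{−φ(δ)−1} · (Γ(φ(δ)+1, ω̂v) − Γ(φ(δ)+1, ω̂μ)), where the inner sum runs over all tuples δ = (δ_0,…,δ_{b−1}) of nonnegative integers with δ_0 + ⋯ + δ_{b−1} = p, φ(δ) = Σ_{q=0}^{b−1} q·δ_q, ω̂ = pθ/κ, and Γ(s,x) = ∫_x^∞ t^{s−1} e^{−t} dt. (This is the exact closed form of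 the own-message average BLER ε̄_L^{x_L} of the low-priority user in Theorems 2 and 4, with κ = α_L γ₀.) -/
open MeasureTheory Set Filter

/-!
Expanding `G (x / κ) = (1 - e^{-θx/κ} S(θx/κ))^a`, with `S` the truncated exponential series,
by the binomial theorem and then `S^p` by the multinomial theorem turns the integrand into `1` plus
a finite combination of the functions `x^φ e^{-(pθ/κ) x}`. The substitution `t = (pθ/κ) x`
integrates each of these over `[v, μ]` to a difference of upper incomplete gamma values, and the
constant term contributes `χ√N (μ - v) = 1`.
-/

lemma integrableOn_Ioi_pow_mul_exp_neg (m : ℕ) (x : ℝ) :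
    IntegrableOn (fun t : ℝ => t ^ m * Real.exp (-t)) (Ioi x) := by
  refine integrable_of_isBigO_exp_neg (b := 1 / 2) (by norm_num) (by fun_prop) ?_
  refine ((isLittleO_pow_exp_pos_mul_atTop m (b := 1 / 2) (by norm_num)).isBigO.mul
    (Asymptotics.isBigO_refl (fun t : ℝ => Real.exp (-t)) atTop)).congr_right fun t => ?_
  rw [← Real.exp_add]
  ring_nf

lemma intervalIntegral_pow_mul_exp_neg_mul (m : ℕ) {c : ℝ} (hc : c ≠ 0) (v μ : ℝ) :
    ∫ x in v..μ, x ^ m * Real.exp (-c * x) =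
      c ^ (-(m : ℤ) - 1) *
        ((∫ t in Ioi (c * v), t ^ m * Real.exp (-t)) -
          ∫ t in Ioi (c * μ), t ^ m * Real.exp (-t)) := by
  have hscale (x : ℝ) :
      x ^ m * Real.exp (-c * x) = (c ^ m)⁻¹ * ((c * x) ^ m * Real.exp (-(c * x))) := by
    rw [mul_pow, neg_mul]
    field_simp
  simp_rw [hscale]
  rw [intervalIntegral.integral_const_mul,
    intervalIntegral.integral_comp_mul_left (fun t => t ^ m * Real.exp (-t)) hc,
    intervalIntegral.integral_Ioi_sub_Ioi' (integrableOn_Ioi_pow_mul_exp_neg m _)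
      (integrableOn_Ioi_pow_mul_exp_neg m _),
    smul_eq_mul, ← mul_assoc, zpow_sub_one₀ hc, zpow_neg, zpow_natCast]

lemma sum_range_mul_pow_pow {R : Type*} [CommSemiring R] (c : ℕ → R) (z : R) (b p : ℕ) :
    (∑ q ∈ Finset.range b, c q * z ^ q) ^ p =
      ∑ δ ∈ Finset.Nat.antidiagonalTuple b p,
        (Nat.multinomial Finset.univ δ : R) * (∏ q : Fin b, c q ^ δ q) *
          z ^ ∑ q : Fin b, (q : ℕ) * δ q := by
  rw [Finset.sum_range (fun q => c q * z ^ q), Finset.sum_pow_eq_sum_piAntidiag,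
    Finset.piAntidiag_univ_fin_eq_antidiagonalTuple]
  refine Finset.sum_congr rfl fun δ _ => ?_
  rw [mul_assoc, ← Finset.prod_pow_eq_pow_sum, ← Finset.prod_mul_distrib]
  congr 1
  refine Finset.prod_congr rfl fun q _ => ?_
  rw [mul_pow, ← pow_mul]

lemma one_sub_pow_eq_one_add_sum_Icc {R : Type*} [CommRing R] (u : R) (a : ℕ) :
    (1 - u) ^ a = 1 + ∑ p ∈ Finset.Icc 1 a, (-1) ^ p * (a.choose p : R) * u ^ p := by
  rw [sub_eq_neg_add, add_pow, Finset.range_eq_Ico,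
    Finset.sum_eq_sum_Ico_succ_bot (Nat.succ_pos a), zero_add, Nat.succ_eq_add_one,
    Finset.Ico_add_one_right_eq_Icc]
  simp only [pow_zero, one_pow, mul_one, Nat.choose_zero_right, Nat.cast_one]
  congr 1
  exact Finset.sum_congr rfl fun p _ => by rw [neg_pow]; ring

lemma one_sub_exp_mul_sum_pow_div_factorial_pow (a b : ℕ) (θ κ x : ℝ) :
    (1 - Real.exp (-θ * (x / κ)) *
        ∑ q ∈ Finset.range b, (θ * (x / κ)) ^ q / q.factorial) ^ a =
      1 + ∑ p ∈ Finset.Icc 1 a, ∑ δ ∈ Finset.Nat.antidiagonalTuple b p,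
        (-1 : ℝ) ^ p * (a.choose p : ℝ) * (Nat.multinomial Finset.univ δ : ℝ) *
          (∏ q : Fin b, (θ ^ (q : ℕ) / ((q : ℕ).factorial : ℝ)) ^ δ q) *
          κ ^ (-((∑ q : Fin b, (q : ℕ) * δ q : ℕ) : ℤ)) *
          (x ^ (∑ q : Fin b, (q : ℕ) * δ q) * Real.exp (-((p : ℝ) * θ / κ) * x)) := by
  have hseries (q : ℕ) :
      (θ * (x / κ)) ^ q / q.factorial = θ ^ q / q.factorial * (x / κ) ^ q := by
    ring
  rw [one_sub_pow_eq_one_add_sum_Icc]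
  congr 1
  refine Finset.sum_congr rfl fun p _ => ?_
  have hexp : Real.exp (-θ * (x / κ)) ^ p = Real.exp (-((p : ℝ) * θ / κ) * x) := by
    rw [← Real.exp_nat_mul]
    ring_nf
  simp_rw [hseries, mul_pow, hexp, sum_range_mul_pow_pow, Finset.mul_sum]
  refine Finset.sum_congr rfl fun δ _ => ?_
  rw [div_pow, zpow_neg, zpow_natCast]
  ring

theorem stmt_17_general (a b : ℕ)
    (θ κ χ N β : ℝ) (hθ : 0 < θ) (hκ : 0 < κ) (hχ : 0 < χ) (hN : 0 < N)
    (v μ : ℝ) (hv : v = β - 1 / (2 * χ * Real.sqrt N))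
    (hμ : μ = β + 1 / (2 * χ * Real.sqrt N))
    (G : ℝ → ℝ)
    (hG : ∀ x, G x =
      (1 - Real.exp (-θ * x) * ∑ p ∈ Finset.range b, (θ * x) ^ p / p.factorial) ^ a) :
    χ * Real.sqrt N * ∫ x in v..μ, G (x / κ) =
      1 + χ * Real.sqrt N *
        ∑ p ∈ Finset.Icc 1 a, ∑ δ ∈ Finset.Nat.antidiagonalTuple b p,
          (-1 : ℝ) ^ p * (a.choose p : ℝ) * (Nat.multinomial Finset.univ δ : ℝ) *
            (∏ q : Fin b, (θ ^ (q : ℕ) / ((q : ℕ).factorial : ℝ)) ^ δ q) *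
            κ ^ (-((∑ q : Fin b, (q : ℕ) * δ q : ℕ) : ℤ)) *
            ((p : ℝ) * θ / κ) ^ (-((∑ q : Fin b, (q : ℕ) * δ q : ℕ) : ℤ) - 1) *
            ((∫ t in Set.Ioi ((p : ℝ) * θ / κ * v),
                t ^ (∑ q : Fin b, (q : ℕ) * δ q) * Real.exp (-t)) -
              ∫ t in Set.Ioi ((p : ℝ) * θ / κ * μ),
                t ^ (∑ q : Fin b, (q : ℕ) * δ q) * Real.exp (-t)) := by
  have hwidth : χ * Real.sqrt N * (μ - v) = 1 := by
    have : 0 < χ * Real.sqrt N := by positivity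
    rw [hv, hμ]
    field_simp
    ring
  simp_rw [hG, one_sub_exp_mul_sum_pow_div_factorial_pow]
  rw [intervalIntegral.integral_add intervalIntegrable_const
      (Continuous.intervalIntegrable (by fun_prop) _ _),
    intervalIntegral.integral_const, smul_eq_mul, mul_one, mul_add, hwidth,
    intervalIntegral.integral_finsetSum fun p _ => Continuous.intervalIntegrable (by fun_prop) _ _]
  congr 2
  refine Finset.sum_congr rfl fun p hp => ?_
  have hrate : (p : ℝ) * θ / κ ≠ 0 := by
    have : 0 < p := (Finset.mem_Icc.mp hp).1
    positivity
  rw [intervalIntegral.integral_finsetSum fun δ _ =>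
    Continuous.intervalIntegrable (by fun_prop) _ _]
  refine Finset.sum_congr rfl fun δ _ => ?_
  rw [intervalIntegral.integral_const_mul, intervalIntegral_pow_mul_exp_neg_mul _ hrate]
  ring

/-- Exact closed form of the own-message average BLER of the low-priority user
(Theorems 2 and 4, term `ε̄_L^{x_L}` with `κ = α_L γ₀`):
`χ√N ∫_v^μ G(x/κ) dx
  = 1 + χ√N Σ_{p=1}^{a} Σ_{δ} (−1)^p C(a,p) (p!/(δ₀!⋯δ_{b−1}!))
      (Π_q (θ^q/q!)^{δ_q}) κ^{−φ(δ)} ω̂^{−φ(δ)−1} (Γ(φ(δ)+1, ω̂v) − Γ(φ(δ)+1, ω̂μ))`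
with `ω̂ = pθ/κ` and `Γ(s,x) = ∫_x^∞ t^{s−1} e^{−t} dt`. -/
theorem stmt_17 (a b : ℕ) (ha : 1 ≤ a) (hb : 1 ≤ b)
    (θ κ χ N β : ℝ) (hθ : 0 < θ) (hκ : 0 < κ) (hχ : 0 < χ) (hN : 0 < N) (hβ : 0 < β)
    (v μ : ℝ) (hv : v = β - 1 / (2 * χ * Real.sqrt N))
    (hμ : μ = β + 1 / (2 * χ * Real.sqrt N)) (hv0 : 0 < v)
    (G : ℝ → ℝ)
    (hG : ∀ x, G x =
      (1 - Real.exp (-θ * x) * ∑ p ∈ Finset.range b, (θ * x) ^ p / p.factorial) ^ a) :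
    χ * Real.sqrt N * ∫ x in v..μ, G (x / κ) =
      1 + χ * Real.sqrt N *
        ∑ p ∈ Finset.Icc 1 a, ∑ δ ∈ Finset.Nat.antidiagonalTuple b p,
          (-1 : ℝ) ^ p * (a.choose p : ℝ) * (Nat.multinomial Finset.univ δ : ℝ) *
            (∏ q : Fin b, (θ ^ (q : ℕ) / ((q : ℕ).factorial : ℝ)) ^ δ q) *
            κ ^ (-((∑ q : Fin b, (q : ℕ) * δ q : ℕ) : ℤ)) *
            ((p : ℝ) * θ / κ) ^ (-((∑ q : Fin b, (q : ℕ) * δ q : ℕ) : ℤ) - 1) *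
            ((∫ t in Set.Ioi ((p : ℝ) * θ / κ * v),
                t ^ (∑ q : Fin b, (q : ℕ) * δ q) * Real.exp (-t)) -
              ∫ t in Set.Ioi ((p : ℝ) * θ / κ * μ),
                t ^ (∑ q : Fin b, (q : ℕ) * δ q) * Real.exp (-t)) :=
  stmt_17_general a b θ κ χ N β hθ hκ hχ hN v μ hv hμ G hG
end

section
/- Let a ≥ 1 and b ≥ 1 be natural numbers and θ > 0, c > 0, α_H > 0, α_L > 0, χ > 0, N > 0, β > 0 reals with v = β − 1/(2χ√N) > 0, μ = β + 1/(2χ√N), and μ < α_H/α_L. Define G(x) = (1 − e^{−θx} Σ_{p=0}^{b−1} (θx)^p/p!)^a and B_x = x/(c(α_H − α_L x)). Then χ√N · ∫_v^μ G(B_x) dx = 1 + (χ·α_H·√N/(c·α_L²)) · Σ_{p=1}^{a} Σ_{δ} Σ_{q=0}^{φ(δ)} C(φ(δ),q) · (−1/(c·α_L))^q · (−1)^p · C(a,p) · (p!/(δ_0!···δ_{b−1}!)) · (Π_{r=0}^{b−1} (θ^r/r!)^{δ_r}) · e^{ω/(c·α_L)} · A(p,δ,q), where the δ-sum runs over all tuples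 δ = (δ_0,…,δ_{b−1}) of nonnegative integers summing to p, φ(δ) = Σ_{r} r·δ_r, ω = pθ, φ̂ = φ(δ) − q − 2, φ_H = 1/(c·α_L) + B_v, κ_H = 1/(c·α_L) + B_μ, and A(p,δ,q) equals: ω^{−φ̂−1}·(Γ(φ̂+1, ωφ_H) − Γ(φ̂+1, ωκ_H)) if φ̂ ≥ 0; ∫_{ωφ_H}^∞ t^{−1} e^{−t} dt − ∫_{ωκ_H}^∞ t^{−1} e^{−t} dt if φ̂ = −1; and ω·(∫_{ωκ_H}^∞ t^{−1} e^{−t} dt − ∫_{ωφ_H}^∞ t^{−1} e^{−t} dt) + e^{−ωφ_H}/φ_H − e^{−ωκ_H}/κ_H if φ̂ = −2. Here Γ(s,x) = ∫_x^∞ t^{s−1} e^{−t} dt. (This is the exact closed form of the average BLER of the high-priority user, Theorem 1, likewise Theorem 3 with the LCS parameters.) -/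
/-!
Expanding the `a`-th power of the Erlang CDF by the binomial and multinomial theorems writes
`G t` as `1` plus a combination of terms `t ^ φ(δ) * exp (-(p θ t))`; the constant term contributes
`χ √N (μ - v) = 1`. In the remaining terms substitute `u = 1/(c αL) + B x = αH/(c αL (αH - αL x))`,
so that `dx = αH/(c αL²) u⁻² du` and `B x = u - 1/(c αL)`; expanding `(u - 1/(c αL)) ^ φ(δ)`
binomially leaves integrals of `u ^ φ̂ * exp (-(ω u))` over `[φH, κH]` with `φ̂ ≥ -2`. The scaling
`t = ω u` turns these into differences of upper incomplete gamma integrals, and for `φ̂ = -2` one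
integration by parts reduces to `φ̂ = -1`.
-/

open MeasureTheory Set Filter intervalIntegral Real Finset

theorem integrableOn_zpow_mul_exp_neg_Ioi (k : ℤ) {x : ℝ} (hx : 0 < x) :
    IntegrableOn (fun t : ℝ => t ^ k * exp (-t)) (Ioi x) := by
  refine integrable_of_isBigO_exp_neg (b := 1 / 2) (by norm_num) ?_ ?_
  · refine ContinuousOn.mul ?_ (by fun_prop)
    exact continuousOn_id.zpow₀ k fun t ht => Or.inl (hx.trans_le ht).ne'
  · have h := (isLittleO_zpow_exp_pos_mul_atTop k (b := 1 / 2) (by norm_num)).isBigO.mul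
      (Asymptotics.isBigO_refl (fun t : ℝ => exp (-t)) atTop)
    refine h.congr_right fun t => ?_
    rw [← exp_add]
    ring_nf

theorem integral_comp_mul_left_eq_sub_integral_Ioi {f : ℝ → ℝ} {ω x y : ℝ} (hω : ω ≠ 0)
    (hx : IntegrableOn f (Ioi (ω * x))) (hy : IntegrableOn f (Ioi (ω * y))) :
    ∫ u in x..y, f (ω * u) = ω⁻¹ * ((∫ t in Ioi (ω * x), f t) - ∫ t in Ioi (ω * y), f t) := by
  rw [integral_comp_mul_left f hω, integral_Ioi_sub_Ioi' hx hy, smul_eq_mul]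

theorem integral_zpow_mul_exp_neg_mul {ω x y : ℝ} (hω : 0 < ω) (hx : 0 < x) (hy : 0 < y)
    (k : ℤ) :
    ∫ u in x..y, u ^ k * exp (-(ω * u)) =
      ω ^ (-k - 1) * ((∫ t in Ioi (ω * x), t ^ k * exp (-t)) -
        ∫ t in Ioi (ω * y), t ^ k * exp (-t)) := by
  have hscale : ∀ u : ℝ, u ^ k * exp (-(ω * u)) = ω ^ (-k) * ((ω * u) ^ k * exp (-(ω * u))) :=
    fun u => by
      rw [mul_zpow, zpow_neg, ← mul_assoc, ← mul_assoc, inv_mul_cancel₀ (by positivity), one_mul]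
  simp_rw [hscale]
  rw [intervalIntegral.integral_const_mul, integral_comp_mul_left_eq_sub_integral_Ioi
    (f := fun t => t ^ k * exp (-t)) hω.ne' (integrableOn_zpow_mul_exp_neg_Ioi k (by positivity))
    (integrableOn_zpow_mul_exp_neg_Ioi k (by positivity)), ← mul_assoc, sub_eq_add_neg (-k),
    zpow_add₀ hω.ne', zpow_neg_one]

theorem integral_zpow_neg_two_mul_exp_neg_mul (ω : ℝ) {x y : ℝ} (hx : 0 < x) (hy : 0 < y) :
    ∫ u in x..y, u ^ (-2 : ℤ) * exp (-(ω * u)) =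
      exp (-ω * x) / x - exp (-ω * y) / y - ω * ∫ u in x..y, u⁻¹ * exp (-(ω * u)) := by
  have hpos : ∀ u ∈ uIcc x y, 0 < u := fun u hu =>
    (lt_min hx hy).trans_le (by simpa using hu.1)
  have hderiv : ∀ u ∈ uIcc x y, HasDerivAt (fun u => -(u⁻¹ * exp (-(ω * u))))
      (u ^ (-2 : ℤ) * exp (-(ω * u)) + ω * (u⁻¹ * exp (-(ω * u)))) u := by
    intro u hu
    have h := ((hasDerivAt_inv (hpos u hu).ne').fun_mul
      ((((hasDerivAt_id' u).const_mul ω).fun_neg).exp)).fun_neg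
    refine h.congr_deriv ?_
    rw [zpow_neg, zpow_ofNat]
    ring
  have hcont : ∀ k : ℤ, IntervalIntegrable (fun u : ℝ => u ^ k * exp (-(ω * u))) volume x y :=
    fun k => (ContinuousOn.mul (continuousOn_id.zpow₀ k fun u hu => Or.inl (hpos u hu).ne')
      (by fun_prop)).intervalIntegrable
  have hinv := (hcont (-1)).const_mul ω
  simp only [zpow_neg_one] at hinv
  rw [eq_sub_iff_add_eq, ← intervalIntegral.integral_const_mul, ← intervalIntegral.integral_add
    (hcont (-2)) hinv, integral_eq_sub_of_hasDerivAt hderiv ((hcont (-2)).add hinv)]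
  simp only [neg_mul]
  field_simp
  ring

theorem integral_zpow_mul_exp_neg_mul_eq_ite {ω x y : ℝ} (hω : 0 < ω) (hx : 0 < x) (hy : 0 < y)
    {k : ℤ} (hk : -2 ≤ k) :
    ∫ u in x..y, u ^ k * exp (-(ω * u)) =
      if 0 ≤ k then
        ω ^ (-k - 1) * ((∫ t in Ioi (ω * x), t ^ k * exp (-t)) -
          ∫ t in Ioi (ω * y), t ^ k * exp (-t))
      else if k = -1 then
        (∫ t in Ioi (ω * x), t⁻¹ * exp (-t)) - ∫ t in Ioi (ω * y), t⁻¹ * exp (-t)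
      else
        ω * ((∫ t in Ioi (ω * y), t⁻¹ * exp (-t)) - ∫ t in Ioi (ω * x), t⁻¹ * exp (-t)) +
          exp (-ω * x) / x - exp (-ω * y) / y := by
  have hinv := integral_zpow_mul_exp_neg_mul hω hx hy (-1)
  simp only [zpow_neg_one, neg_neg, sub_self, zpow_zero, one_mul] at hinv
  split_ifs with hk0 hk1
  · exact integral_zpow_mul_exp_neg_mul hω hx hy k
  · rw [hk1]
    simpa only [zpow_neg_one] using hinv
  · obtain rfl : k = -2 := by omega
    rw [integral_zpow_neg_two_mul_exp_neg_mul ω hx hy, hinv]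
    ring

theorem one_div_mul_add_div_mul_sub {c αH αL x : ℝ} (hc : c ≠ 0) (hαL : αL ≠ 0)
    (hx : αH - αL * x ≠ 0) :
    1 / (c * αL) + x / (c * (αH - αL * x)) = αH / (c * αL * (αH - αL * x)) := by
  field_simp
  ring

theorem hasDerivAt_div_mul_sub {c αH αL x : ℝ} (hc : c ≠ 0) (hx : αH - αL * x ≠ 0) :
    HasDerivAt (fun x => x / (c * (αH - αL * x))) (αH / (c * (αH - αL * x) ^ 2)) x := by
  have hden : HasDerivAt (fun x => c * (αH - αL * x)) (c * (0 - αL * 1)) x :=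
    ((hasDerivAt_const x αH).sub ((hasDerivAt_id x).const_mul αL)).const_mul c
  refine ((hasDerivAt_id x).div hden (mul_ne_zero hc hx)).congr_deriv ?_
  simp only [id]
  field_simp
  ring

theorem integral_comp_div_mul_sub {F : ℝ → ℝ} (hF : Continuous F) {c αH αL v μ : ℝ}
    (hc : c ≠ 0) (hαH : αH ≠ 0) (hαL : αL ≠ 0) (hden : ∀ x ∈ uIcc v μ, αH - αL * x ≠ 0) :
    ∫ x in v..μ, F (x / (c * (αH - αL * x))) =
      αH / (c * αL ^ 2) * ∫ u in (1 / (c * αL) + v / (c * (αH - αL * v)))..(1 / (c * αL) +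
        μ / (c * (αH - αL * μ))), F (u - 1 / (c * αL)) * u ^ (-2 : ℤ) := by
  set s := 1 / (c * αL)
  have hderiv : ∀ x ∈ uIcc v μ, HasDerivAt (fun x => s + x / (c * (αH - αL * x)))
      (αH / (c * (αH - αL * x) ^ 2)) x :=
    fun x hx => (hasDerivAt_div_mul_sub hc (hden x hx)).const_add s
  have hderiv_cont : ContinuousOn (fun x => αH / (c * (αH - αL * x) ^ 2)) (uIcc v μ) :=
    continuousOn_const.div (by fun_prop) fun x hx => by have := hden x hx; positivity
  have himage : ContinuousOn (fun u => αH / (c * αL ^ 2) * (F (u - s) * u ^ (-2 : ℤ)))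
      ((fun x => s + x / (c * (αH - αL * x))) '' uIcc v μ) := by
    refine continuousOn_const.mul ((hF.comp (continuous_sub_right s)).continuousOn.mul
      (continuousOn_id.zpow₀ _ ?_))
    rintro _ ⟨x, hx, rfl⟩
    refine Or.inl (show s + x / (c * (αH - αL * x)) ≠ 0 from ?_)
    rw [one_div_mul_add_div_mul_sub hc hαL (hden x hx)]
    exact div_ne_zero hαH (mul_ne_zero (mul_ne_zero hc hαL) (hden x hx))
  rw [← intervalIntegral.integral_const_mul, ← integral_deriv_smul_comp' hderiv hderiv_cont himage]
  refine integral_congr fun x hx => ?_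
  have hx0 := hden x hx
  simp only [Function.comp, smul_eq_mul, add_sub_cancel_left]
  rw [one_div_mul_add_div_mul_sub hc hαL hx0, zpow_neg, zpow_ofNat]
  generalize F _ = y
  field_simp

theorem sub_pow_mul_exp_mul_zpow_neg_two {u : ℝ} (hu : u ≠ 0) (s ω : ℝ) (m : ℕ) :
    (u - s) ^ m * exp (-(ω * (u - s))) * u ^ (-2 : ℤ) =
      ∑ q ∈ range (m + 1), (m.choose q : ℝ) * (-s) ^ q * exp (ω * s) *
        (u ^ ((m : ℤ) - q - 2) * exp (-(ω * u))) := by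
  have hexp : exp (-(ω * (u - s))) = exp (ω * s) * exp (-(ω * u)) := by
    rw [← exp_add]
    ring_nf
  rw [hexp, sub_eq_neg_add, add_pow, sum_mul, sum_mul]
  refine sum_congr rfl fun q hq => ?_
  have hzpow : u ^ ((m : ℤ) - q - 2) = u ^ (m - q) * u ^ (-2 : ℤ) := by
    rw [← zpow_natCast, ← zpow_add₀ hu,
      Nat.cast_sub (Nat.lt_succ_iff.mp (mem_range.mp hq))]
    ring_nf
  rw [hzpow]
  ring

theorem integral_div_mul_sub_pow_mul_exp {c αH αL v μ : ℝ} (hc : 0 < c) (hαH : 0 < αH)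
    (hαL : 0 < αL) (hden : ∀ x ∈ uIcc v μ, 0 < αH - αL * x) (ω : ℝ) (m : ℕ) :
    ∫ x in v..μ, (x / (c * (αH - αL * x))) ^ m * exp (-(ω * (x / (c * (αH - αL * x))))) =
      αH / (c * αL ^ 2) * ∑ q ∈ range (m + 1),
        (m.choose q : ℝ) * (-(1 / (c * αL))) ^ q * exp (ω / (c * αL)) *
          ∫ u in (1 / (c * αL) + v / (c * (αH - αL * v)))..(1 / (c * αL) +
            μ / (c * (αH - αL * μ))), u ^ ((m : ℤ) - q - 2) * exp (-(ω * u)) := by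
  set s := 1 / (c * αL)
  have hpos : ∀ x ∈ uIcc v μ, 0 < s + x / (c * (αH - αL * x)) := fun x hx => by
    have := hden x hx
    rw [one_div_mul_add_div_mul_sub hc.ne' hαL.ne' this.ne']
    positivity
  have hupos : ∀ u ∈ uIcc (s + v / (c * (αH - αL * v))) (s + μ / (c * (αH - αL * μ))), 0 < u :=
    fun u hu => (lt_min (hpos v left_mem_uIcc) (hpos μ right_mem_uIcc)).trans_le
      (by simpa using hu.1)
  have hint : ∀ q ∈ range (m + 1), IntervalIntegrable
      (fun u : ℝ => (m.choose q : ℝ) * (-s) ^ q * exp (ω * s) *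
        (u ^ ((m : ℤ) - q - 2) * exp (-(ω * u)))) volume
      (s + v / (c * (αH - αL * v))) (s + μ / (c * (αH - αL * μ))) := fun q _ =>
    (continuousOn_const.mul ((continuousOn_id.zpow₀ _ fun u hu => Or.inl (hupos u hu).ne').mul
      (by fun_prop))).intervalIntegrable
  rw [integral_comp_div_mul_sub (F := fun t => t ^ m * exp (-(ω * t))) (by fun_prop) hc.ne'
      hαH.ne' hαL.ne' fun x hx => (hden x hx).ne',
    integral_congr fun u hu => sub_pow_mul_exp_mul_zpow_neg_two (hupos u hu).ne' s ω m,
    intervalIntegral.integral_finsetSum hint]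
  simp only [intervalIntegral.integral_const_mul, s, mul_one_div]

/-- `φ(δ)` in the paper. -/
def tupleDegree {b : ℕ} (δ : Fin b → ℕ) : ℕ := ∑ r : Fin b, (r : ℕ) * δ r

noncomputable def erlangCdfPowCoeff {b : ℕ} (a : ℕ) (θ : ℝ) (p : ℕ) (δ : Fin b → ℕ) : ℝ :=
  (-1) ^ p * (a.choose p : ℝ) * (Nat.multinomial univ δ : ℝ) *
    ∏ r : Fin b, (θ ^ (r : ℕ) / ((r : ℕ).factorial : ℝ)) ^ δ r

theorem erlangCdf_pow_eq (a b : ℕ) (θ t : ℝ) :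
    (1 - exp (-θ * t) * ∑ r ∈ range b, (θ * t) ^ r / r.factorial) ^ a =
      1 + ∑ p ∈ Icc 1 a, ∑ δ ∈ Nat.antidiagonalTuple b p,
        erlangCdfPowCoeff a θ p δ * (t ^ tupleDegree δ * exp (-(p * θ * t))) := by
  rw [sub_eq_add_neg, add_comm, add_pow, range_eq_Ico, sum_eq_sum_Ico_succ_bot (by omega)]
  simp only [pow_zero, one_pow, Nat.choose_zero_right, Nat.cast_one, mul_one]
  congr 1
  refine sum_congr rfl fun p _ => ?_
  have hexp : exp (-θ * t) ^ p = exp (-(p * θ * t)) := by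
    rw [← exp_nat_mul]
    ring_nf
  rw [neg_pow, mul_pow, hexp,
    ← Fin.sum_univ_eq_sum_range (fun r => (θ * t) ^ r / (r.factorial : ℝ)),
    sum_pow_eq_sum_piAntidiag, piAntidiag_univ_fin_eq_antidiagonalTuple]
  simp only [mul_sum, sum_mul]
  refine sum_congr rfl fun δ _ => ?_
  have hprod : ∏ r : Fin b, ((θ * t) ^ (r : ℕ) / ((r : ℕ).factorial : ℝ)) ^ δ r =
      (∏ r : Fin b, (θ ^ (r : ℕ) / ((r : ℕ).factorial : ℝ)) ^ δ r) * t ^ tupleDegree δ := by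
    rw [tupleDegree, ← prod_pow_eq_pow_sum, ← prod_mul_distrib]
    refine prod_congr rfl fun r _ => ?_
    rw [mul_pow, ← div_mul_eq_mul_div, mul_pow, ← pow_mul]
  rw [hprod, erlangCdfPowCoeff]
  ring

theorem integral_erlangCdf_pow_comp {f : ℝ → ℝ} {v μ : ℝ} (hf : ContinuousOn f (uIcc v μ))
    (a b : ℕ) (θ : ℝ) :
    ∫ x in v..μ, (1 - exp (-θ * f x) * ∑ r ∈ range b, (θ * f x) ^ r / r.factorial) ^ a =
      (μ - v) + ∑ p ∈ Icc 1 a, ∑ δ ∈ Nat.antidiagonalTuple b p,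
        erlangCdfPowCoeff a θ p δ * ∫ x in v..μ, f x ^ tupleDegree δ * exp (-(p * θ * f x)) := by
  have hterm : ∀ (p : ℕ) (δ : Fin b → ℕ), IntervalIntegrable
      (fun x => erlangCdfPowCoeff a θ p δ * (f x ^ tupleDegree δ * exp (-(p * θ * f x))))
      volume v μ := fun p δ =>
    (continuousOn_const.mul ((hf.pow _).mul (continuous_exp.comp_continuousOn
      (continuousOn_const.mul hf).neg))).intervalIntegrable
  have hinner : ∀ p : ℕ, IntervalIntegrable (fun x => ∑ δ ∈ Nat.antidiagonalTuple b p,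
      erlangCdfPowCoeff a θ p δ * (f x ^ tupleDegree δ * exp (-(p * θ * f x)))) volume v μ :=
    fun p => by simpa only [Finset.sum_fn] using IntervalIntegrable.sum _ fun δ _ => hterm p δ
  have houter : IntervalIntegrable (fun x => ∑ p ∈ Icc 1 a, ∑ δ ∈ Nat.antidiagonalTuple b p,
      erlangCdfPowCoeff a θ p δ * (f x ^ tupleDegree δ * exp (-(p * θ * f x)))) volume v μ := by
    simpa only [Finset.sum_fn] using IntervalIntegrable.sum _ fun p _ => hinner p
  simp only [erlangCdf_pow_eq]
  rw [intervalIntegral.integral_add intervalIntegrable_const houter,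
    intervalIntegral.integral_const, smul_eq_mul, mul_one,
    intervalIntegral.integral_finsetSum fun p _ => hinner p]
  congr 1
  refine sum_congr rfl fun p _ => ?_
  rw [intervalIntegral.integral_finsetSum fun δ _ => hterm p δ]
  simp only [intervalIntegral.integral_const_mul]

theorem stmt_18_general (a b : ℕ)
    (θ c αH αL χ N β : ℝ) (hθ : 0 < θ) (hc : 0 < c) (hαH : 0 < αH) (hαL : 0 < αL)
    (hχ : 0 < χ) (hN : 0 < N)
    (v μ : ℝ) (hv : v = β - 1 / (2 * χ * Real.sqrt N))
    (hμ : μ = β + 1 / (2 * χ * Real.sqrt N)) (hμαβ : μ < αH / αL)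
    (G : ℝ → ℝ)
    (hG : ∀ x, G x =
      (1 - Real.exp (-θ * x) * ∑ p ∈ Finset.range b, (θ * x) ^ p / p.factorial) ^ a)
    (B : ℝ → ℝ) (hB : ∀ x, B x = x / (c * (αH - αL * x)))
    (φH κH : ℝ) (hφH : φH = 1 / (c * αL) + B v) (hκH : κH = 1 / (c * αL) + B μ)
    (A : ℕ → ℤ → ℝ)
    (hA : ∀ (p : ℕ) (φhat : ℤ),
      A p φhat =
        if 0 ≤ φhat then
          ((p : ℝ) * θ) ^ (-φhat - 1) *
            ((∫ t in Set.Ioi ((p : ℝ) * θ * φH), t ^ φhat * Real.exp (-t)) -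
              ∫ t in Set.Ioi ((p : ℝ) * θ * κH), t ^ φhat * Real.exp (-t))
        else if φhat = -1 then
          (∫ t in Set.Ioi ((p : ℝ) * θ * φH), t⁻¹ * Real.exp (-t)) -
            ∫ t in Set.Ioi ((p : ℝ) * θ * κH), t⁻¹ * Real.exp (-t)
        else
          (p : ℝ) * θ *
              ((∫ t in Set.Ioi ((p : ℝ) * θ * κH), t⁻¹ * Real.exp (-t)) -
                ∫ t in Set.Ioi ((p : ℝ) * θ * φH), t⁻¹ * Real.exp (-t)) +
            Real.exp (-((p : ℝ) * θ) * φH) / φH -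
            Real.exp (-((p : ℝ) * θ) * κH) / κH) :
    χ * Real.sqrt N * ∫ x in v..μ, G (B x) =
      1 + χ * αH * Real.sqrt N / (c * αL ^ 2) *
        ∑ p ∈ Finset.Icc 1 a, ∑ δ ∈ Finset.Nat.antidiagonalTuple b p,
          ∑ q ∈ Finset.range ((∑ r : Fin b, (r : ℕ) * δ r) + 1),
            ((∑ r : Fin b, (r : ℕ) * δ r).choose q : ℝ) * (-(1 / (c * αL))) ^ q *
              (-1 : ℝ) ^ p * (a.choose p : ℝ) * (Nat.multinomial Finset.univ δ : ℝ) *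
              (∏ r : Fin b, (θ ^ (r : ℕ) / ((r : ℕ).factorial : ℝ)) ^ δ r) *
              Real.exp ((p : ℝ) * θ / (c * αL)) *
              A p (((∑ r : Fin b, (r : ℕ) * δ r : ℕ) : ℤ) - q - 2) := by
  have hhalf_width : 0 < 1 / (2 * χ * √N) := by positivity
  have hwidth : χ * √N * (μ - v) = 1 := by
    rw [hv, hμ]
    field_simp
    ring
  have hden : ∀ x ∈ uIcc v μ, 0 < αH - αL * x := fun x hx => by
    rw [Set.uIcc_of_le (by linarith)] at hx
    nlinarith [(lt_div_iff₀ hαL).mp (hx.2.trans_lt hμαβ)]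
  have hshift_pos : ∀ x ∈ uIcc v μ, 0 < 1 / (c * αL) + B x := fun x hx => by
    have := hden x hx
    rw [hB, one_div_mul_add_div_mul_sub hc.ne' hαL.ne' this.ne']
    positivity
  have hBcont : ContinuousOn B (uIcc v μ) := by
    simp only [funext hB]
    exact continuousOn_id.div (by fun_prop) fun x hx => (mul_pos hc (hden x hx)).ne'
  have hterm : ∀ p ∈ Finset.Icc 1 a, ∀ m : ℕ,
      ∫ x in v..μ, B x ^ m * exp (-(p * θ * B x)) =
        αH / (c * αL ^ 2) * ∑ q ∈ range (m + 1), (m.choose q : ℝ) * (-(1 / (c * αL))) ^ q *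
          exp (p * θ / (c * αL)) * A p ((m : ℤ) - q - 2) := fun p hp m => by
    have hω : 0 < (p : ℝ) * θ := mul_pos (by exact_mod_cast (Finset.mem_Icc.mp hp).1) hθ
    simp only [hB]
    rw [integral_div_mul_sub_pow_mul_exp hc hαH hαL hden]
    refine congrArg _ (sum_congr rfl fun q hq => congrArg _ ?_)
    rw [hA, ← hB, ← hB, ← hφH, ← hκH, integral_zpow_mul_exp_neg_mul_eq_ite hω
      (hφH ▸ hshift_pos v left_mem_uIcc) (hκH ▸ hshift_pos μ right_mem_uIcc)]
    have := mem_range.mp hq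
    omega
  simp only [hG]
  rw [integral_erlangCdf_pow_comp hBcont, mul_add, hwidth, sum_congr rfl fun p hp =>
    sum_congr rfl fun δ _ => congrArg _ (hterm p hp (tupleDegree δ))]
  simp only [mul_sum, erlangCdfPowCoeff, tupleDegree]
  refine congrArg _ (sum_congr rfl fun p _ => sum_congr rfl fun δ _ => sum_congr rfl fun q _ => ?_)
  ring

/-- Exact closed form of the average BLER of the high-priority user (Theorem 1,
likewise Theorem 3 with the LCS parameters): with
`G(x) = (1 − e^{−θx} Σ_{p<b} (θx)^p/p!)^a`, `B_x = x/(c(α_H − α_L x))`,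
`φ_H = 1/(cα_L) + B_v`, `κ_H = 1/(cα_L) + B_μ`, `ω = pθ`, `φ̂ = φ(δ) − q − 2`,
`χ√N ∫_v^μ G(B_x) dx
  = 1 + (χ α_H √N/(c α_L²)) Σ_{p=1}^{a} Σ_{δ} Σ_{q=0}^{φ(δ)}
      C(φ(δ),q) (−1/(cα_L))^q (−1)^p C(a,p) (p!/(δ₀!⋯δ_{b−1}!))
      (Π_r (θ^r/r!)^{δ_r}) e^{ω/(cα_L)} A(p,δ,q)`,
where `A` is given by the three-case formula (incomplete gamma for `φ̂ ≥ 0`,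
exponential-integral terms for `φ̂ = −1` and `φ̂ = −2`). -/
theorem stmt_18 (a b : ℕ) (ha : 1 ≤ a) (hb : 1 ≤ b)
    (θ c αH αL χ N β : ℝ) (hθ : 0 < θ) (hc : 0 < c) (hαH : 0 < αH) (hαL : 0 < αL)
    (hχ : 0 < χ) (hN : 0 < N) (hβ : 0 < β)
    (v μ : ℝ) (hv : v = β - 1 / (2 * χ * Real.sqrt N))
    (hμ : μ = β + 1 / (2 * χ * Real.sqrt N)) (hv0 : 0 < v) (hμαβ : μ < αH / αL)
    (G : ℝ → ℝ)
    (hG : ∀ x, G x =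
      (1 - Real.exp (-θ * x) * ∑ p ∈ Finset.range b, (θ * x) ^ p / p.factorial) ^ a)
    (B : ℝ → ℝ) (hB : ∀ x, B x = x / (c * (αH - αL * x)))
    (φH κH : ℝ) (hφH : φH = 1 / (c * αL) + B v) (hκH : κH = 1 / (c * αL) + B μ)
    (A : ℕ → ℤ → ℝ)
    (hA : ∀ (p : ℕ) (φhat : ℤ),
      A p φhat =
        if 0 ≤ φhat then
          ((p : ℝ) * θ) ^ (-φhat - 1) *
            ((∫ t in Set.Ioi ((p : ℝ) * θ * φH), t ^ φhat * Real.exp (-t)) -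
              ∫ t in Set.Ioi ((p : ℝ) * θ * κH), t ^ φhat * Real.exp (-t))
        else if φhat = -1 then
          (∫ t in Set.Ioi ((p : ℝ) * θ * φH), t⁻¹ * Real.exp (-t)) -
            ∫ t in Set.Ioi ((p : ℝ) * θ * κH), t⁻¹ * Real.exp (-t)
        else
          (p : ℝ) * θ *
              ((∫ t in Set.Ioi ((p : ℝ) * θ * κH), t⁻¹ * Real.exp (-t)) -
                ∫ t in Set.Ioi ((p : ℝ) * θ * φH), t⁻¹ * Real.exp (-t)) +
            Real.exp (-((p : ℝ) * θ) * φH) / φH -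
            Real.exp (-((p : ℝ) * θ) * κH) / κH) :
    χ * Real.sqrt N * ∫ x in v..μ, G (B x) =
      1 + χ * αH * Real.sqrt N / (c * αL ^ 2) *
        ∑ p ∈ Finset.Icc 1 a, ∑ δ ∈ Finset.Nat.antidiagonalTuple b p,
          ∑ q ∈ Finset.range ((∑ r : Fin b, (r : ℕ) * δ r) + 1),
            ((∑ r : Fin b, (r : ℕ) * δ r).choose q : ℝ) * (-(1 / (c * αL))) ^ q *
              (-1 : ℝ) ^ p * (a.choose p : ℝ) * (Nat.multinomial Finset.univ δ : ℝ) *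
              (∏ r : Fin b, (θ ^ (r : ℕ) / ((r : ℕ).factorial : ℝ)) ^ δ r) *
              Real.exp ((p : ℝ) * θ / (c * αL)) *
              A p (((∑ r : Fin b, (r : ℕ) * δ r : ℕ) : ℤ) - q - 2) :=
  stmt_18_general a b θ c αH αL χ N β hθ hc hαH hαL hχ hN v μ hv hμ hμαβ G hG B hB φH κH hφH hκH A
    hA
end
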